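/- (Closed-form DiscVA for the forward and consistency of the CSA decomposition.) Let T > 0, σ > 0, r, r^f ∈ ℝ, s₀ > 0, K ∈ ℝ. On a probability space let W : [0,T] × Ω → ℝ be jointly measurable with W_0 = 0 and such that for every u ∈ [0,T] the law of W_u is Gaussian with mean 0 and variance u. Set S_u := s₀ · exp( (r − σ²/2) u + σ W_u ), the clean value V̂_u := S_u − K e^{−r(T−u)}, the front-office price P̂_0 := e^{−r^f T} · E[ S_T − K ], and the discounting adjustment DiscVA_0 := E[ ∫_0^T (r − r^f) e^{−r^f u} V̂_u du ]. Then: (i) DiscVA_0 = ( s₀ − K e^{−rT} ) · ( e^{(r − r^f) T} − 1 ); and (ii) P̂_0 − DiscVA_0 = s₀ − K e^{−rT}, i.e. the front-office price corrected by DiscVA coincides with the r-discounted clean value of the forward. -/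

import Mathlib

open MeasureTheory ProbabilityTheory Real

/-!
The Gaussian moment generating function gives `E[S_u] = s₀ e^{ru}`, hence
`E[V̂_u] = e^{ru} (s₀ − K e^{−rT})`. The expectation and the time integral may be exchanged because
the only random part of the integrand, the discounted lognormal price, is nonnegative with an
integrable expectation in `u` (Tonelli). What remains is `∫_0^T (r − r^f) e^{(r − r^f) u} du
= e^{(r − r^f) T} − 1`. For (ii), `P̂₀ = e^{−r^f T} (s₀ e^{rT} − K) = (s₀ − K e^{−rT}) e^{(r − r^f) T}`.
-/

lemma integral_mul_exp_mul (a b c : ℝ) :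
    ∫ x in a..b, c * exp (c * x) = exp (c * b) - exp (c * a) := by
  rw [intervalIntegral.integral_const_mul, intervalIntegral.mul_integral_comp_mul_left,
    integral_exp]

lemma integrable_prod_of_nonneg {α β : Type*} [MeasurableSpace α] [MeasurableSpace β]
    {ν : Measure α} {μ : Measure β} [SFinite μ] {f : α × β → ℝ} {g : α → ℝ}
    (hf : AEStronglyMeasurable f (ν.prod μ)) (hf₀ : ∀ p, 0 ≤ f p)
    (hfi : ∀ᵐ a ∂ν, Integrable (fun b ↦ f (a, b)) μ)
    (hfg : ∀ᵐ a ∂ν, ∫ b, f (a, b) ∂μ = g a) (hg : Integrable g ν) :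
    Integrable f (ν.prod μ) := by
  refine (integrable_prod_iff hf).mpr ⟨hfi, hg.congr ?_⟩
  filter_upwards [hfg] with a ha
  simp_rw [norm_of_nonneg (hf₀ _), ha]

section Lognormal

variable {Ω : Type*} {m : MeasurableSpace Ω} {μ : Measure Ω} {X : Ω → ℝ}

lemma integrable_exp_mul_of_map_eq_gaussianReal [NeZero μ] {m' : ℝ} {v : NNReal}
    (hX : μ.map X = gaussianReal m' v) (t : ℝ) : Integrable (fun ω ↦ exp (t * X ω)) μ :=
  mgf_pos_iff.mp (by rw [mgf_gaussianReal hX]; exact exp_pos _)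

variable {u : ℝ}

lemma integrable_exp_lognormal [NeZero μ] (hX : μ.map X = gaussianReal 0 u.toNNReal) (a σ : ℝ) :
    Integrable (fun ω ↦ exp ((a - σ ^ 2 / 2) * u + σ * X ω)) μ := by
  simp_rw [exp_add]
  exact (integrable_exp_mul_of_map_eq_gaussianReal hX σ).const_mul _

lemma integral_exp_lognormal (hu : 0 ≤ u) (hX : μ.map X = gaussianReal 0 u.toNNReal) (a σ : ℝ) :
    ∫ ω, exp ((a - σ ^ 2 / 2) * u + σ * X ω) ∂μ = exp (a * u) := by
  simp_rw [exp_add]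
  rw [integral_const_mul, ← mgf, mgf_gaussianReal hX, coe_toNNReal _ hu, ← exp_add]
  ring_nf

lemma integral_forward_value [IsProbabilityMeasure μ] (hu : 0 ≤ u)
    (hX : μ.map X = gaussianReal 0 u.toNNReal) (s₀ K r σ T : ℝ) :
    ∫ ω, (s₀ * exp ((r - σ ^ 2 / 2) * u + σ * X ω) - K * exp (-r * (T - u))) ∂μ
      = exp (r * u) * (s₀ - K * exp (-r * T)) := by
  have hdiscount : exp (-r * (T - u)) = exp (r * u) * exp (-r * T) := by
    rw [← exp_add]; ring_nf
  rw [integral_sub ((integrable_exp_lognormal hX r σ).const_mul s₀) (integrable_const _),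
    integral_const_mul, integral_exp_lognormal hu hX, integral_const, probReal_univ, one_smul,
    hdiscount]
  ring

end Lognormal

theorem integral_discVA_forward {Ω : Type*} {m : MeasurableSpace Ω} (μ : Measure Ω)
    [IsProbabilityMeasure μ] {T : ℝ} (hT : 0 ≤ T) (σ r rf s₀ K : ℝ) {W : ℝ → Ω → ℝ}
    (hW_meas : Measurable (Function.uncurry W))
    (hW_law : ∀ u ∈ Set.Ioc (0 : ℝ) T, μ.map (W u) = gaussianReal 0 u.toNNReal) :
    ∫ ω, (∫ u in Set.Ioc (0 : ℝ) T, (r - rf) * exp (-rf * u) *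
        (s₀ * exp ((r - σ ^ 2 / 2) * u + σ * W u ω) - K * exp (-r * (T - u)))) ∂μ
      = (s₀ - K * exp (-r * T)) * (exp ((r - rf) * T) - 1) := by
  have hW : Measurable fun p : ℝ × Ω ↦ W p.1 p.2 := hW_meas
  have hdiscounted : Integrable (fun p : ℝ × Ω ↦ exp (-rf * p.1) *
      exp ((r - σ ^ 2 / 2) * p.1 + σ * W p.1 p.2)) ((volume.restrict (Set.Ioc 0 T)).prod μ) := by
    refine integrable_prod_of_nonneg (μ := μ) (g := fun u ↦ exp ((r - rf) * u)) ?_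
      (fun _ ↦ by positivity) ?_ ?_ (by fun_prop : Continuous _).integrableOn_Ioc
    · exact Measurable.aestronglyMeasurable (by fun_prop)
    · filter_upwards [ae_restrict_mem measurableSet_Ioc] with u hu
      exact (integrable_exp_lognormal (hW_law u hu) r σ).const_mul _
    · filter_upwards [ae_restrict_mem measurableSet_Ioc] with u hu
      rw [integral_const_mul, integral_exp_lognormal hu.1.le (hW_law u hu), ← exp_add]
      ring_nf
  have hintegrand : Integrable (Function.uncurry fun ω u ↦ (r - rf) * exp (-rf * u) *
      (s₀ * exp ((r - σ ^ 2 / 2) * u + σ * W u ω) - K * exp (-r * (T - u))))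
      (μ.prod (volume.restrict (Set.Ioc 0 T))) := by
    have hdet : Integrable (fun u ↦ (r - rf) * exp (-rf * u) * (K * exp (-r * (T - u))))
        (volume.restrict (Set.Ioc 0 T)) := (by fun_prop : Continuous _).integrableOn_Ioc
    have h : Integrable (fun p : ℝ × Ω ↦ (r - rf) * exp (-rf * p.1) *
        (s₀ * exp ((r - σ ^ 2 / 2) * p.1 + σ * W p.1 p.2) - K * exp (-r * (T - p.1))))
        ((volume.restrict (Set.Ioc 0 T)).prod μ) :=
      ((hdiscounted.const_mul ((r - rf) * s₀)).sub (hdet.comp_fst μ)).congr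
        (ae_of_all _ fun p ↦ by simp only [Pi.sub_apply]; ring)
    exact h.swap
  calc _ = ∫ u in Set.Ioc (0 : ℝ) T, ∫ ω, (r - rf) * exp (-rf * u) *
        (s₀ * exp ((r - σ ^ 2 / 2) * u + σ * W u ω) - K * exp (-r * (T - u))) ∂μ :=
        integral_integral_swap hintegrand
    _ = ∫ u in Set.Ioc (0 : ℝ) T, (r - rf) * exp ((r - rf) * u) * (s₀ - K * exp (-r * T)) := by
        refine setIntegral_congr_fun measurableSet_Ioc fun u hu ↦ ?_
        have hgrowth : exp ((r - rf) * u) = exp (-rf * u) * exp (r * u) := by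
          rw [← exp_add]; ring_nf
        rw [integral_const_mul, integral_forward_value hu.1.le (hW_law u hu), hgrowth]
        ring
    _ = _ := by
        rw [integral_mul_const, ← intervalIntegral.integral_of_le hT, integral_mul_exp_mul]
        simp only [mul_zero, exp_zero]
        ring

theorem forward_discVA_closed_form_general
    {Ω : Type*} {m0 : MeasurableSpace Ω} (μ : Measure Ω) [IsProbabilityMeasure μ]
    (T σ r rf s₀ K : ℝ) (hT : 0 < T)
    (W : ℝ → Ω → ℝ) (hW_meas : Measurable (Function.uncurry W))
    (hW_law : ∀ u ∈ Set.Icc (0 : ℝ) T,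
      μ.map (W u) = ProbabilityTheory.gaussianReal 0 (Real.toNNReal u)) :
    -- (i) closed form for `DiscVA₀`
    (∫ ω, (∫ u in Set.Ioc (0 : ℝ) T,
        (r - rf) * Real.exp (-rf * u) *
          (s₀ * Real.exp ((r - σ ^ 2 / 2) * u + σ * W u ω)
            - K * Real.exp (-r * (T - u)))) ∂μ)
      = (s₀ - K * Real.exp (-r * T)) * (Real.exp ((r - rf) * T) - 1) ∧
    -- (ii) `P̂₀ − DiscVA₀ = s₀ − K e^{−rT}`
    Real.exp (-rf * T) *
        (∫ ω, (s₀ * Real.exp ((r - σ ^ 2 / 2) * T + σ * W T ω) - K) ∂μ)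
      - (∫ ω, (∫ u in Set.Ioc (0 : ℝ) T,
          (r - rf) * Real.exp (-rf * u) *
            (s₀ * Real.exp ((r - σ ^ 2 / 2) * u + σ * W u ω)
              - K * Real.exp (-r * (T - u)))) ∂μ)
      = s₀ - K * Real.exp (-r * T) := by
  have hdiscVA := integral_discVA_forward μ hT.le σ r rf s₀ K hW_meas
    fun u hu ↦ hW_law u (Set.Ioc_subset_Icc_self hu)
  have hlaw_T := hW_law T ⟨hT.le, le_rfl⟩
  have hprice : ∫ ω, (s₀ * exp ((r - σ ^ 2 / 2) * T + σ * W T ω) - K) ∂μ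
      = s₀ * exp (r * T) - K := by
    rw [integral_sub ((integrable_exp_lognormal hlaw_T r σ).const_mul s₀) (integrable_const _),
      integral_const_mul, integral_exp_lognormal hT.le hlaw_T, integral_const, probReal_univ,
      one_smul]
  refine ⟨hdiscVA, ?_⟩
  have hgrowth : exp (-rf * T) * exp (r * T) = exp ((r - rf) * T) := by
    rw [← exp_add]; ring_nf
  have hdiscount : exp (-r * T) * exp ((r - rf) * T) = exp (-rf * T) := by
    rw [← exp_add]; ring_nf
  rw [hprice, hdiscVA]
  linear_combination s₀ * hgrowth + K * hdiscount

/-- **Closed-form DiscVA for the forward and consistency of the CSA decomposition.**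
For the forward with strike `K` on the lognormal asset `S_u = s₀ exp((r − σ²/2)u + σ W_u)`,
with clean value `V̂_u = S_u − K e^{−r(T−u)}`, front-office price `P̂₀ = e^{−r^f T} E[S_T − K]`
and `DiscVA₀ = E[∫_0^T (r − r^f) e^{−r^f u} V̂_u du]`, one has
(i) `DiscVA₀ = (s₀ − K e^{−rT})(e^{(r − r^f)T} − 1)` and
(ii) `P̂₀ − DiscVA₀ = s₀ − K e^{−rT}`. -/
theorem forward_discVA_closed_form
    {Ω : Type*} {m0 : MeasurableSpace Ω} (μ : Measure Ω) [IsProbabilityMeasure μ]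
    (T σ r rf s₀ K : ℝ) (hT : 0 < T) (hσ : 0 < σ) (hs₀ : 0 < s₀)
    (W : ℝ → Ω → ℝ) (hW_meas : Measurable (Function.uncurry W))
    (hW0 : ∀ ω, W 0 ω = 0)
    (hW_law : ∀ u ∈ Set.Icc (0 : ℝ) T,
      μ.map (W u) = ProbabilityTheory.gaussianReal 0 (Real.toNNReal u)) :
    -- (i) closed form for `DiscVA₀`
    (∫ ω, (∫ u in Set.Ioc (0 : ℝ) T,
        (r - rf) * Real.exp (-rf * u) *
          (s₀ * Real.exp ((r - σ ^ 2 / 2) * u + σ * W u ω)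
            - K * Real.exp (-r * (T - u)))) ∂μ)
      = (s₀ - K * Real.exp (-r * T)) * (Real.exp ((r - rf) * T) - 1) ∧
    -- (ii) `P̂₀ − DiscVA₀ = s₀ − K e^{−rT}`
    Real.exp (-rf * T) *
        (∫ ω, (s₀ * Real.exp ((r - σ ^ 2 / 2) * T + σ * W T ω) - K) ∂μ)
      - (∫ ω, (∫ u in Set.Ioc (0 : ℝ) T,
          (r - rf) * Real.exp (-rf * u) *
            (s₀ * Real.exp ((r - σ ^ 2 / 2) * u + σ * W u ω)
              - K * Real.exp (-r * (T - u)))) ∂μ)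
      = s₀ - K * Real.exp (-r * T) :=
  forward_discVA_closed_form_general (m0 := m0) μ T σ r rf s₀ K hT W hW_meas hW_law
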